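/- For each q ∈ ℝ, define F_q on the open set {(x¹,x²) ∈ ℝ² : x² > 0} by F_q(x¹,x²) = q((x¹)² + (x²)²)·arctan(x¹/x²) − (1/8)((x¹)² + (x²)²)·log((x¹)² + (x²)²). Then F_q satisfies the associativity equations with the identity metric η_{αβ} = δ_{αβ}: for all (x¹,x²) with x² > 0 and all α,β,γ,δ ∈ {1,2}, ∑_{λ=1}^2 (∂³F_q/∂x^α∂x^β∂x^λ)(∂³F_q/∂x^γ∂x^δ∂x^λ) = ∑_{λ=1}^2 (∂³F_q/∂x^γ∂x^β∂x^λ)(∂³F_q/∂x^α∂x^δ∂x^λ). -/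

import Mathlib

/-!
In two dimensions a fully symmetric 3-tensor `c` is determined by the four numbers
`T n = c_{abc}` with `a + b + c = n`, and the associativity equations for `η = δ` reduce to the
single equation `T 0 * T 2 + T 1 * T 3 = T 1 ^ 2 + T 2 ^ 2`. We compute the third derivatives of
`F_q` on the half-plane layer by layer (gradient, Hessian, third derivatives) and check this
equation by clearing denominators.
-/

open scoped BigOperators

noncomputable section

/-- The pencil of prepotentials
`F_q(x¹,x²) = q((x¹)² + (x²)²) arctan(x¹/x²) − (1/8)((x¹)² + (x²)²) log((x¹)² + (x²)²)`. -/
def Fq (q : ℝ) (x : Fin 2 → ℝ) : ℝ :=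
  q * ((x 0) ^ 2 + (x 1) ^ 2) * Real.arctan (x 0 / x 1)
    - (1 / 8) * ((x 0) ^ 2 + (x 1) ^ 2) * Real.log ((x 0) ^ 2 + (x 1) ^ 2)

/-- The standard basis vector `e_i` of `ℝ²`. -/
def e2 (i : Fin 2) : Fin 2 → ℝ := Pi.single i 1

/-- Third partial derivative `∂³F/∂x^a∂x^b∂x^g` at `x`. -/
def d3 (F : (Fin 2 → ℝ) → ℝ) (x : Fin 2 → ℝ) (a b g : Fin 2) : ℝ :=
  iteratedFDeriv ℝ 3 F x ![e2 a, e2 b, e2 g]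

open ContinuousLinearMap Filter Topology Real

def AssociativityEquations {ι : Type*} [Fintype ι] (c : ι → ι → ι → ℝ) : Prop :=
  ∀ α β γ δ, ∑ l, c α β l * c γ δ l = ∑ l, c γ β l * c α δ l

theorem associativityEquations_of_two_dim (T : ℕ → ℝ)
    (hT : T 0 * T 2 + T 1 * T 3 = T 1 ^ 2 + T 2 ^ 2) :
    AssociativityEquations fun a b c : Fin 2 => T (a + b + c) := by
  intro α β γ δ
  fin_cases α <;> fin_cases β <;> fin_cases γ <;> fin_cases δ <;>
    simp only [Fin.sum_univ_two] <;> norm_num <;>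
    first | ring1 | linear_combination hT | linear_combination -hT

theorem HasFDerivAt.div {𝕜 E : Type*} [NontriviallyNormedField 𝕜] [NormedAddCommGroup E]
    [NormedSpace 𝕜 E] {f g : E → 𝕜} {f' g' : E →L[𝕜] 𝕜} {x : E}
    (hf : HasFDerivAt f f' x) (hg : HasFDerivAt g g' x) (hx : g x ≠ 0) :
    HasFDerivAt (fun y => f y / g y) ((g x)⁻¹ • f' - (f x / g x ^ 2) • g') x := by
  simp only [div_eq_mul_inv]
  refine (hf.fun_mul ((hasDerivAt_inv hx).comp_hasFDerivAt x hg)).congr_fderiv ?_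
  ext v
  simp
  field_simp
  ring

section ThirdDerivative

variable {ι : Type*} [Fintype ι] [DecidableEq ι]

local notation "dx" i => (proj i : (ι → ℝ) →L[ℝ] ℝ)

theorem iteratedFDeriv_three_single_of_hasFDerivAt {F : (ι → ℝ) → ℝ}
    {P : ι → (ι → ℝ) → ℝ} {Q : ι → ι → (ι → ℝ) → ℝ} {T : ι → ι → ι → ℝ} {x : ι → ℝ}
    (hF : ∀ᶠ y in 𝓝 x, HasFDerivAt F (∑ i, P i y • dx i) y)
    (hP : ∀ᶠ y in 𝓝 x, ∀ i, HasFDerivAt (P i) (∑ j, Q i j y • dx j) y)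
    (hQ : ∀ i j, HasFDerivAt (Q i j) (∑ k, T i j k • dx k) x) (a b c : ι) :
    iteratedFDeriv ℝ 3 F x ![Pi.single a 1, Pi.single b 1, Pi.single c 1] = T c b a := by
  set G₂ : (ι → ℝ) → (ι → ℝ) →L[ℝ] (ι → ℝ) →L[ℝ] ℝ :=
    fun y => ∑ i, ∑ j, Q i j y • (dx j).smulRight (dx i)
  have hG₁ : ∀ᶠ y in 𝓝 x, HasFDerivAt (fun y => ∑ i, P i y • dx i) (G₂ y) y := by
    filter_upwards [hP] with y hy
    have := HasFDerivAt.sum (u := Finset.univ) fun i _ => (hy i).smul_const (dx i)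
    rw [Finset.sum_fn] at this
    refine this.congr_fderiv ?_
    ext
    simp [G₂, Finset.sum_mul, mul_assoc]
  have hG₂ : HasFDerivAt G₂
      (∑ i, ∑ j, (∑ k, T i j k • dx k).smulRight ((dx j).smulRight (dx i))) x := by
    -- instance search misses this one: the two `SMul` structures agree only after unfolding
    have : IsBoundedSMul ℝ ((ι → ℝ) →L[ℝ] (ι → ℝ) →L[ℝ] ℝ) :=
      NormedSpace.toIsBoundedSMul (𝕜 := ℝ) (E := (ι → ℝ) →L[ℝ] (ι → ℝ) →L[ℝ] ℝ)
    have := HasFDerivAt.sum (u := Finset.univ) fun i _ =>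
      HasFDerivAt.sum (u := Finset.univ) fun j _ =>
        (hQ i j).smul_const ((dx j).smulRight (dx i))
    simpa only [Finset.sum_fn] using this
  have hF₂ : fderiv ℝ (fderiv ℝ F) =ᶠ[𝓝 x] G₂ := by
    filter_upwards [hF.eventually_nhds, hG₁] with y hFy hG₁y
    exact (EventuallyEq.fderiv_eq (hFy.mono fun z hz => hz.fderiv)).trans hG₁y.fderiv
  rw [iteratedFDeriv_succ_apply_right, iteratedFDeriv_two_apply]
  change fderiv ℝ (fderiv ℝ (fderiv ℝ F)) x _ _ _ = _
  rw [hF₂.fderiv_eq, hG₂.fderiv]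
  simp [Fin.init, Pi.single_apply]

end ThirdDerivative

section Prepotential

local notation "dx" i => (proj i : (Fin 2 → ℝ) →L[ℝ] ℝ)

variable {q : ℝ} {z : Fin 2 → ℝ}

theorem hasFDerivAt_sq_add_sq :
    HasFDerivAt (fun y : Fin 2 → ℝ => y 0 ^ 2 + y 1 ^ 2)
      ((2 * z 0) • (dx 0) + (2 * z 1) • dx 1) z := by
  refine (((hasFDerivAt_apply 0 z).pow 2).add ((hasFDerivAt_apply 1 z).pow 2)).congr_fderiv ?_
  ext v
  simp

theorem hasFDerivAt_arctan_div (hz : z 1 ≠ 0) :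
    HasFDerivAt (fun y : Fin 2 → ℝ => arctan (y 0 / y 1))
      ((z 1 / (z 0 ^ 2 + z 1 ^ 2)) • (dx 0) - (z 0 / (z 0 ^ 2 + z 1 ^ 2)) • dx 1) z := by
  refine (((hasFDerivAt_apply 0 z).div (hasFDerivAt_apply 1 z) hz).arctan).congr_fderiv ?_
  have : z 0 ^ 2 + z 1 ^ 2 ≠ 0 := by positivity
  ext v
  simp
  field_simp
  ring

def gradFq (q : ℝ) : Fin 2 → (Fin 2 → ℝ) → ℝ :=
  ![fun z => 2 * q * z 0 * arctan (z 0 / z 1) + q * z 1 - z 0 * (log (z 0 ^ 2 + z 1 ^ 2) + 1) / 4,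
    fun z => 2 * q * z 1 * arctan (z 0 / z 1) - q * z 0 - z 1 * (log (z 0 ^ 2 + z 1 ^ 2) + 1) / 4]

/- `hessFq q n` and `thirdFq q z n` are the second and third partial derivatives of `F_q` in
which `n` of the derivatives are taken in the direction `1` (the paper's `x²`). -/
def hessFq (q : ℝ) : ℕ → (Fin 2 → ℝ) → ℝ
  | 0 => fun z => 2 * q * arctan (z 0 / z 1) - (log (z 0 ^ 2 + z 1 ^ 2) + 1) / 4
      + (4 * q * z 0 * z 1 - z 0 ^ 2) / (2 * (z 0 ^ 2 + z 1 ^ 2))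
  | 1 => fun z => q - (4 * q * z 0 ^ 2 + z 0 * z 1) / (2 * (z 0 ^ 2 + z 1 ^ 2))
  | _ => fun z => 2 * q * arctan (z 0 / z 1) - (log (z 0 ^ 2 + z 1 ^ 2) + 1) / 4
      - (4 * q * z 0 * z 1 + z 1 ^ 2) / (2 * (z 0 ^ 2 + z 1 ^ 2))

def thirdFq (q : ℝ) (z : Fin 2 → ℝ) : ℕ → ℝ
  | 0 => (8 * q * z 1 ^ 3 - z 0 * (z 0 ^ 2 + 3 * z 1 ^ 2)) / (2 * (z 0 ^ 2 + z 1 ^ 2) ^ 2)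
  | 1 => (z 1 * (z 0 ^ 2 - z 1 ^ 2) - 8 * q * z 0 * z 1 ^ 2) / (2 * (z 0 ^ 2 + z 1 ^ 2) ^ 2)
  | 2 => (8 * q * z 0 ^ 2 * z 1 + z 0 * (z 1 ^ 2 - z 0 ^ 2)) / (2 * (z 0 ^ 2 + z 1 ^ 2) ^ 2)
  | _ => -(8 * q * z 0 ^ 3 + z 1 * (3 * z 0 ^ 2 + z 1 ^ 2)) / (2 * (z 0 ^ 2 + z 1 ^ 2) ^ 2)

theorem hasFDerivAt_Fq (hz : z 1 ≠ 0) : HasFDerivAt (Fq q) (∑ i, gradFq q i z • dx i) z := by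
  have hS : z 0 ^ 2 + z 1 ^ 2 ≠ 0 := by positivity
  have hS' := hasFDerivAt_sq_add_sq (z := z)
  refine (((hS'.const_mul q).fun_mul (hasFDerivAt_arctan_div hz)).sub
    ((hS'.const_mul (1 / 8)).fun_mul (hS'.log hS))).congr_fderiv ?_
  ext v
  simp [gradFq]
  field_simp
  ring

theorem hasFDerivAt_gradFq (hz : z 1 ≠ 0) (i : Fin 2) :
    HasFDerivAt (gradFq q i) (∑ j : Fin 2, hessFq q (i + j) z • dx j) z := by
  have hS : z 0 ^ 2 + z 1 ^ 2 ≠ 0 := by positivity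
  have hθ := hasFDerivAt_arctan_div (z := z) hz
  have hL := ((hasFDerivAt_sq_add_sq (z := z)).log hS).add_const 1
  have h0 := hasFDerivAt_apply (𝕜 := ℝ) 0 z
  have h1 := hasFDerivAt_apply (𝕜 := ℝ) 1 z
  fin_cases i
  · refine ((((h0.const_mul (2 * q)).fun_mul hθ).add (h1.const_mul q)).sub
      ((h0.fun_mul hL).div (hasFDerivAt_const 4 z) four_ne_zero)).congr_fderiv ?_
    ext v
    simp [hessFq]
    field_simp
    ring
  · refine ((((h1.const_mul (2 * q)).fun_mul hθ).sub (h0.const_mul q)).sub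
      ((h1.fun_mul hL).div (hasFDerivAt_const 4 z) four_ne_zero)).congr_fderiv ?_
    ext v
    simp [hessFq]
    field_simp
    ring

theorem hasFDerivAt_hessFq (hz : z 1 ≠ 0) {n : ℕ} (hn : n ≤ 2) :
    HasFDerivAt (hessFq q n) (∑ k : Fin 2, thirdFq q z (n + k) • dx k) z := by
  have hS : z 0 ^ 2 + z 1 ^ 2 ≠ 0 := by positivity
  have h2S : 2 * (z 0 ^ 2 + z 1 ^ 2) ≠ 0 := by positivity
  have hS' := hasFDerivAt_sq_add_sq (z := z)
  have hθ := hasFDerivAt_arctan_div (z := z) hz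
  have hL := ((hS'.log hS).add_const 1).div (hasFDerivAt_const 4 z) four_ne_zero
  have h0 := hasFDerivAt_apply (𝕜 := ℝ) 0 z
  have h1 := hasFDerivAt_apply (𝕜 := ℝ) 1 z
  obtain rfl | rfl | rfl : n = 0 ∨ n = 1 ∨ n = 2 := by omega
  · refine (((hθ.const_mul (2 * q)).sub hL).add
      ((((h0.const_mul (4 * q)).fun_mul h1).sub (h0.pow 2)).div (hS'.const_mul 2) h2S)
      ).congr_fderiv ?_
    ext v
    simp [thirdFq]
    field_simp
    ring
  · refine ((hasFDerivAt_const q z).sub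
      ((((h0.pow 2).const_mul (4 * q)).add (h0.fun_mul h1)).div (hS'.const_mul 2) h2S)
      ).congr_fderiv ?_
    ext v
    simp [thirdFq]
    field_simp
    ring
  · refine (((hθ.const_mul (2 * q)).sub hL).sub
      ((((h0.const_mul (4 * q)).fun_mul h1).add (h1.pow 2)).div (hS'.const_mul 2) h2S)
      ).congr_fderiv ?_
    ext v
    simp [thirdFq]
    field_simp
    ring

theorem d3_Fq (hx : 0 < z 1) (a b c : Fin 2) : d3 (Fq q) z a b c = thirdFq q z (a + b + c) := by
  have hz : ∀ᶠ y in 𝓝 z, y 1 ≠ 0 :=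
    (isOpen_lt continuous_const (continuous_apply 1)).eventually_mem hx |>.mono fun y hy => hy.ne'
  simp only [d3, e2]
  rw [iteratedFDeriv_three_single_of_hasFDerivAt (P := gradFq q)
    (Q := fun i j => hessFq q (i + j)) (T := fun i j k => thirdFq q z (i + j + k))
    (hz.mono fun y hy => hasFDerivAt_Fq hy) (hz.mono fun y hy => hasFDerivAt_gradFq hy)
    fun i j => hasFDerivAt_hessFq hx.ne' (by omega)]
  congr 1
  omega

theorem thirdFq_reduced_associativity (q : ℝ) (z : Fin 2 → ℝ) :
    thirdFq q z 0 * thirdFq q z 2 + thirdFq q z 1 * thirdFq q z 3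
      = thirdFq q z 1 ^ 2 + thirdFq q z 2 ^ 2 := by
  by_cases hS : z 0 ^ 2 + z 1 ^ 2 = 0
  · simp [thirdFq, hS]
  · simp only [thirdFq]
    field_simp
    ring

end Prepotential

/-- for each `q ∈ ℝ`, the prepotential `F_q` satisfies the associativity
equations with the identity metric `η_{αβ} = δ_{αβ}` on the half-plane `{x² > 0}`. -/
theorem stmt10 (q : ℝ) :
    ∀ x : Fin 2 → ℝ, 0 < x 1 →
      ∀ α β γ δ : Fin 2,
        ∑ l, d3 (Fq q) x α β l * d3 (Fq q) x γ δ l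
          = ∑ l, d3 (Fq q) x γ β l * d3 (Fq q) x α δ l := by
  intro x hx α β γ δ
  simp only [d3_Fq hx]
  exact associativityEquations_of_two_dim _ (thirdFq_reduced_associativity q x) α β γ δ

end
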